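/- Suppose the past assortments are the reverse revenue-ordered assortments and the revenues r(0) = 0 < r(1) < ⋯ < r(n) are fixed. Then for every S̄ ⊆ N₀ with {0, n} ⊆ S̄, there exist real numbers v_{m,i} (for m ∈ {1,…,n} and i ∈ S_m), serving as the historical sales data, such that the corresponding uncertainty set U_0 is nonempty and S̄ is the unique optimal solution of the robust optimization problem with η = 0: for every S ∈ 𝒮 with S ≠ S̄, inf_{λ ∈ U_0} R^λ(S) < inf_{λ ∈ U_0} R^λ(S̄). -/

import Mathlib

/-!
Let `λ` mix the rankings `k ≻ 0` for `k ∈ S̄` with, at a small weight `ε`, the rankings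
`k ≻ ν(k) ≻ n` for `k ∉ S̄`, where `ν(k)` is the least product of `S̄` above `k`, and take its
choice probabilities as the sales data. Then `S̄` is the unique maximizer of `R^λ`: dropping a
product `a` of `S̄` loses `r(a) ≥ r(1)` on `a ≻ 0`, adding a product `k ∉ S̄` loses on
`k ≻ ν(k) ≻ n`, and for small `ε` the rankings of weight `ε` cannot compensate the first loss.
On the other hand `R^λ(S̄)` is the worst case of `S̄` by LP weak duality: a dual solution charging
only the products `0` and `n` of the nested past assortments is bounded, on every ranking, by the
revenue of its top in `S̄`, with equality on the rankings supporting `λ`. Hence the worst case of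
any other `S` is at most `R^λ(S) < R^λ(S̄)`.
-/

namespace RobustAssortment

/-- `i` is the most preferred product of the assortment `S` under the ranking `σ`. -/
def isTop {n : ℕ} (σ : Equiv.Perm (Fin (n + 1))) (S : Finset (Fin (n + 1)))
    (i : Fin (n + 1)) : Prop :=
  i ∈ S ∧ ∀ j ∈ S, σ i ≤ σ j

instance {n : ℕ} (σ : Equiv.Perm (Fin (n + 1))) (S : Finset (Fin (n + 1)))
    (i : Fin (n + 1)) : Decidable (isTop σ S i) := by
  unfold isTop; infer_instance
/-- A ranking-based choice model: nonnegative weights on rankings summing to one. -/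
def IsChoiceModel {n : ℕ} (lam : Equiv.Perm (Fin (n + 1)) → ℝ) : Prop :=
  (∀ σ, 0 ≤ lam σ) ∧ ∑ σ : Equiv.Perm (Fin (n + 1)), lam σ = 1

/-- Choice probability `D^λ_i(S)`. -/
noncomputable def choiceProb {n : ℕ} (lam : Equiv.Perm (Fin (n + 1)) → ℝ)
    (S : Finset (Fin (n + 1))) (i : Fin (n + 1)) : ℝ :=
  ∑ σ : Equiv.Perm (Fin (n + 1)), if isTop σ S i then lam σ else 0

/-- Expected revenue `R^λ(S)`. -/
noncomputable def expRev {n : ℕ} (r : Fin (n + 1) → ℝ)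
    (lam : Equiv.Perm (Fin (n + 1)) → ℝ) (S : Finset (Fin (n + 1))) : ℝ :=
  ∑ i ∈ S, r i * choiceProb lam S i

/-- The uncertainty set `U_η` of choice models consistent with the sales data. -/
def Uset {n M : ℕ} (Sm : Fin M → Finset (Fin (n + 1)))
    (v : Fin M → Fin (n + 1) → ℝ) (η : ℝ) :
    Set (Equiv.Perm (Fin (n + 1)) → ℝ) :=
  {lam | IsChoiceModel lam ∧
    ∀ m : Fin M, ∀ i ∈ Sm m, |choiceProb lam (Sm m) i - v m i| ≤ η}

/-- Worst-case expected revenue `inf_{λ ∈ U_η} R^λ(S)`. -/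
noncomputable def wcRev {n M : ℕ} (Sm : Fin M → Finset (Fin (n + 1)))
    (v : Fin M → Fin (n + 1) → ℝ) (η : ℝ) (r : Fin (n + 1) → ℝ)
    (S : Finset (Fin (n + 1))) : ℝ :=
  sInf {x | ∃ lam ∈ Uset Sm v η, x = expRev r lam S}


open Finset Equiv

section Rankings

variable {n : ℕ}

lemma last_ne_zero (hn : 1 ≤ n) : Fin.last n ≠ 0 := fun h => by
  simp [Fin.ext_iff] at h
  omega

noncomputable def topOf (σ : Perm (Fin (n + 1))) (S : Finset (Fin (n + 1))) : Fin (n + 1) :=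
  if h : S.Nonempty then σ.symm ((S.image σ).min' (h.image σ)) else 0

variable {σ : Perm (Fin (n + 1))} {S T : Finset (Fin (n + 1))} {i : Fin (n + 1)}

lemma topOf_mem (h : S.Nonempty) : topOf σ S ∈ S := by
  rw [topOf, dif_pos h]
  obtain ⟨x, hx, hxe⟩ := mem_image.1 ((S.image σ).min'_mem (h.image σ))
  rwa [← hxe, symm_apply_apply]

lemma apply_topOf_le (hi : i ∈ S) : σ (topOf σ S) ≤ σ i := by
  rw [topOf, dif_pos ⟨i, hi⟩, apply_symm_apply]
  exact min'_le _ _ (mem_image_of_mem σ hi)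

lemma topOf_eq_of_forall_le (hi : i ∈ S) (h : ∀ j ∈ S, σ i ≤ σ j) : topOf σ S = i :=
  σ.injective (le_antisymm (apply_topOf_le hi) (h _ (topOf_mem ⟨i, hi⟩)))

lemma isTop_iff_eq_topOf (h : S.Nonempty) : isTop σ S i ↔ i = topOf σ S :=
  ⟨fun hi => (topOf_eq_of_forall_le hi.1 hi.2).symm,
    fun e => e ▸ ⟨topOf_mem h, fun _ => apply_topOf_le⟩⟩

lemma topOf_eq_of_subset (hST : S ⊆ T) (hT : topOf σ T = i) (hi : i ∈ S) : topOf σ S = i :=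
  topOf_eq_of_forall_le hi fun _ hj => hT ▸ apply_topOf_le (hST hj)

lemma topOf_one (h0 : 0 ∈ S) : topOf 1 S = 0 :=
  topOf_eq_of_forall_le h0 fun j _ => Fin.zero_le j

lemma cycleRange_le_cycleRange_iff {a x y : Fin (n + 1)} (hx : x ≠ a) (hy : y ≠ a) :
    a.cycleRange x ≤ a.cycleRange y ↔ x ≤ y := by
  rw [Fin.le_def, Fin.le_def]
  rcases hx.lt_or_gt with hx | hx <;> rcases hy.lt_or_gt with hy | hy <;>
    simp only [Fin.coe_cycleRange_of_lt, Fin.cycleRange_of_gt, *] <;>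
    simp only [Fin.lt_def] at hx hy <;> omega

/-- `σ` with `a` moved to the front, the products ranked before it moving back one place. -/
def toFront (a : Fin (n + 1)) (σ : Perm (Fin (n + 1))) : Perm (Fin (n + 1)) :=
  σ.trans (σ a).cycleRange

lemma topOf_toFront (a : Fin (n + 1)) (h : S.Nonempty) :
    topOf (toFront a σ) S = if a ∈ S then a else topOf σ S := by
  split_ifs with ha
  · exact topOf_eq_of_forall_le ha fun j _ => by simp [toFront]
  · refine topOf_eq_of_forall_le (topOf_mem h) fun j hj => ?_
    have hne : ∀ x ∈ S, σ x ≠ σ a := fun x hx e => ha (σ.injective e ▸ hx)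
    exact (cycleRange_le_cycleRange_iff (hne _ (topOf_mem h)) (hne j hj)).2 (apply_topOf_le hj)

end Rankings

section ChoiceModels

variable {n : ℕ} {r : Fin (n + 1) → ℝ} {lam : Perm (Fin (n + 1)) → ℝ} {S : Finset (Fin (n + 1))}

lemma revenue_nonneg (hr0 : r 0 = 0) (hr : Monotone r) (i : Fin (n + 1)) : 0 ≤ r i :=
  hr0 ▸ hr (Fin.zero_le i)

lemma sum_mul_choiceProb (g : Fin (n + 1) → ℝ) (lam : Perm (Fin (n + 1)) → ℝ) (h : S.Nonempty) :
    ∑ i ∈ S, g i * choiceProb lam S i = ∑ σ, lam σ * g (topOf σ S) := by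
  simp only [choiceProb, mul_sum, mul_ite, mul_zero]
  rw [sum_comm]
  refine sum_congr rfl fun σ _ => ?_
  simp only [isTop_iff_eq_topOf h, sum_ite_eq', if_pos (topOf_mem h), mul_comm]

lemma expRev_eq_sum_topOf (h : S.Nonempty) :
    expRev r lam S = ∑ σ, lam σ * r (topOf σ S) :=
  sum_mul_choiceProb r lam h

lemma expRev_nonneg (hlam : IsChoiceModel lam) (hr : ∀ i, 0 ≤ r i) : 0 ≤ expRev r lam S :=
  sum_nonneg fun i _ => mul_nonneg (hr i) (sum_nonneg fun σ _ => by
    split_ifs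
    exacts [hlam.1 σ, le_rfl])

lemma sum_sum_mul_choiceProb {M : ℕ} {Sm : Fin M → Finset (Fin (n + 1))}
    (hSm : ∀ m, (Sm m).Nonempty) (α : Fin M → Fin (n + 1) → ℝ) (lam : Perm (Fin (n + 1)) → ℝ) :
    ∑ m, ∑ i ∈ Sm m, α m i * choiceProb lam (Sm m) i =
      ∑ σ, lam σ * ∑ m, α m (topOf σ (Sm m)) := by
  simp only [sum_mul_choiceProb _ lam (hSm _), mul_sum]
  exact sum_comm

/-- Weak duality for the robust problem with `η = 0`. -/
lemma sum_dual_le_expRev {M : ℕ} {Sm : Fin M → Finset (Fin (n + 1))}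
    (hSm : ∀ m, (Sm m).Nonempty) {T : Finset (Fin (n + 1))} (hT : T.Nonempty)
    {α : Fin M → Fin (n + 1) → ℝ} (hα : ∀ σ, ∑ m, α m (topOf σ (Sm m)) ≤ r (topOf σ T))
    {v : Fin M → Fin (n + 1) → ℝ} (hlam : lam ∈ Uset Sm v 0) :
    ∑ m, ∑ i ∈ Sm m, α m i * v m i ≤ expRev r lam T := by
  have hv : ∀ m, ∀ i ∈ Sm m, v m i = choiceProb lam (Sm m) i := fun m i hi =>
    (sub_eq_zero.1 (abs_nonpos_iff.1 (hlam.2 m i hi))).symm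
  calc ∑ m, ∑ i ∈ Sm m, α m i * v m i
      = ∑ σ, lam σ * ∑ m, α m (topOf σ (Sm m)) := by
        rw [← sum_sum_mul_choiceProb hSm]
        exact sum_congr rfl fun m _ => sum_congr rfl fun i hi => by rw [hv m i hi]
    _ ≤ ∑ σ, lam σ * r (topOf σ T) :=
        sum_le_sum fun σ _ => mul_le_mul_of_nonneg_left (hα σ) (hlam.1.1 σ)
    _ = expRev r lam T := (expRev_eq_sum_topOf hT).symm

lemma wcRev_lt_wcRev {M : ℕ} {Sm : Fin M → Finset (Fin (n + 1))} {v : Fin M → Fin (n + 1) → ℝ}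
    {η c : ℝ} {S' : Finset (Fin (n + 1))} (hr : ∀ i, 0 ≤ r i) (hlam : lam ∈ Uset Sm v η)
    (hlt : expRev r lam S < c) (hc : ∀ lam' ∈ Uset Sm v η, c ≤ expRev r lam' S') :
    wcRev Sm v η r S < wcRev Sm v η r S' := by
  have hbdd : BddBelow {x | ∃ lam' ∈ Uset Sm v η, x = expRev r lam' S} :=
    ⟨0, by rintro _ ⟨lam', hlam', rfl⟩; exact expRev_nonneg hlam'.1 hr⟩
  calc wcRev Sm v η r S ≤ expRev r lam S := csInf_le hbdd ⟨lam, hlam, rfl⟩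
    _ < c := hlt
    _ ≤ wcRev Sm v η r S' :=
        le_csInf ⟨_, lam, hlam, rfl⟩ (by rintro _ ⟨lam', hlam', rfl⟩; exact hc lam' hlam')

noncomputable def mixture {ι : Type*} [Fintype ι] (w : ι → ℝ) (ρ : ι → Perm (Fin (n + 1)))
    (σ : Perm (Fin (n + 1))) : ℝ :=
  (∑ k, if ρ k = σ then w k else 0) / ∑ k, w k

variable {ι : Type*} [Fintype ι] {w : ι → ℝ} {ρ : ι → Perm (Fin (n + 1))}

lemma sum_mixture_mul (F : Perm (Fin (n + 1)) → ℝ) :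
    ∑ σ, mixture w ρ σ * F σ = (∑ k, w k * F (ρ k)) / ∑ k, w k := by
  simp only [mixture, div_mul_eq_mul_div, ← sum_div, sum_mul, ite_mul, zero_mul]
  rw [sum_comm]
  simp

lemma isChoiceModel_mixture (hw : ∀ k, 0 ≤ w k) (hw' : 0 < ∑ k, w k) :
    IsChoiceModel (mixture w ρ) := by
  refine ⟨fun σ => div_nonneg (sum_nonneg fun k _ => ?_) hw'.le, ?_⟩
  · split_ifs
    exacts [hw k, le_rfl]
  · simpa [hw'.ne'] using sum_mixture_mul (w := w) (ρ := ρ) fun _ => 1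

lemma expRev_mixture (h : S.Nonempty) :
    expRev r (mixture w ρ) S = (∑ k, w k * r (topOf (ρ k) S)) / ∑ k, w k := by
  rw [expRev_eq_sum_topOf h, sum_mixture_mul]

end ChoiceModels

section Telescoping

variable {n : ℕ}

lemma iff_lt_card_filter_of_antitone {d : Fin n → Prop} [DecidablePred d] (hd : Antitone d)
    (m : Fin n) : d m ↔ (m : ℕ) < #{m' | d m'} := by
  constructor
  · intro hm
    have := card_le_card fun x (hx : x ∈ Iic m) => mem_filter.2 ⟨mem_univ x, hd (mem_Iic.1 hx) hm⟩
    rw [Fin.card_Iic] at this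
    omega
  · intro hm
    by_contra hdm
    have := card_le_card fun x (hx : x ∈ ({m' | d m'} : Finset (Fin n))) =>
      mem_Iio.2 (lt_of_not_ge fun hmx => hdm (hd hmx (mem_filter.1 hx).2))
    rw [Fin.card_Iio] at this
    omega

lemma sum_ite_sub_of_iff_lt (F : ℕ → ℝ) {c : ℕ} (hc : c ≤ n) {d : Fin n → Prop}
    [DecidablePred d] (hd : ∀ m, d m ↔ (m : ℕ) < c) :
    ∑ m, (if d m then F (m + 1) - F m else 0) = F c - F 0 := by
  simp only [hd]
  have hrange : {k ∈ range n | k < c} = range c := by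
    ext k
    simp only [mem_filter, mem_range]
    omega
  rw [Fin.sum_univ_eq_sum_range (fun k => if k < c then F (k + 1) - F k else 0), ← sum_filter,
    hrange, sum_range_sub]

end Telescoping

section DualCertificate

variable {n : ℕ}

def revAssortment (n m : ℕ) : Finset (Fin (n + 1)) :=
  {i | (i : ℕ) ≤ m ∨ i = Fin.last n}

@[simp] lemma mem_revAssortment {m : ℕ} {i : Fin (n + 1)} :
    i ∈ revAssortment n m ↔ (i : ℕ) ≤ m ∨ i = Fin.last n := by
  simp [revAssortment]

lemma revAssortment_mono : Monotone (revAssortment n) := fun _ _ hle i => by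
  simp only [mem_revAssortment]
  exact Or.imp_left fun hi => hi.trans hle

lemma topOf_revAssortment_eq_iff {i : Fin (n + 1)} (hi : ∀ m, i ∈ revAssortment n m)
    (σ : Perm (Fin (n + 1))) (m : Fin n) :
    topOf σ (revAssortment n m) = i ↔
      (m : ℕ) < #{m' : Fin n | topOf σ (revAssortment n m') = i} :=
  iff_lt_card_filter_of_antitone
    (fun _ _ hle h => topOf_eq_of_subset (revAssortment_mono (Fin.le_def.1 hle)) h (hi _)) m

noncomputable def ceilIn (s : Finset (Fin (n + 1))) (z : ℕ) : Fin (n + 1) :=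
  if h : {a ∈ s | z ≤ a.val}.Nonempty then {a ∈ s | z ≤ a.val}.min' h else Fin.last n

variable {s : Finset (Fin (n + 1))} {z : ℕ} {a : Fin (n + 1)}

lemma ceilIn_spec (ha : a ∈ s) (hz : z ≤ a) :
    ceilIn s z ∈ s ∧ z ≤ ceilIn s z ∧ ceilIn s z ≤ a := by
  have hne : {a ∈ s | z ≤ a.val}.Nonempty := ⟨a, mem_filter.2 ⟨ha, hz⟩⟩
  rw [ceilIn, dif_pos hne]
  obtain ⟨h1, h2⟩ := mem_filter.1 (min'_mem _ hne)
  exact ⟨h1, h2, min'_le _ _ (mem_filter.2 ⟨ha, hz⟩)⟩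

lemma ceilIn_val (ha : a ∈ s) : ceilIn s a = a :=
  le_antisymm (ceilIn_spec ha le_rfl).2.2 (Fin.le_def.2 (ceilIn_spec ha le_rfl).2.1)

noncomputable def lastPotential (r : Fin (n + 1) → ℝ) (s : Finset (Fin (n + 1))) (z : ℕ) : ℝ :=
  r (ceilIn s z)

noncomputable def zeroPotential (r : Fin (n + 1) → ℝ) (s : Finset (Fin (n + 1))) (z : ℕ) : ℝ :=
  if (ceilIn s z : ℕ) = z ∧ z < n then r (ceilIn s z) else 0

/-- A dual solution of the linear program `inf_{λ ∈ U₀} R^λ(s)`. Its increments telescope, so its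
value on a ranking only depends on how long `n`, resp. `0`, stays the top along the chain of past
assortments. -/
noncomputable def dualCert (r : Fin (n + 1) → ℝ) (s : Finset (Fin (n + 1))) (m : Fin n)
    (i : Fin (n + 1)) : ℝ :=
  if i = Fin.last n then lastPotential r s (m + 1) - lastPotential r s m
  else if i = 0 then zeroPotential r s (m + 1) - zeroPotential r s m else 0

variable {r : Fin (n + 1) → ℝ}

lemma lastPotential_zero (hr0 : r 0 = 0) (h0 : 0 ∈ s) : lastPotential r s 0 = 0 := by
  rw [lastPotential, show ceilIn s 0 = 0 from ceilIn_val h0, hr0]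

lemma zeroPotential_zero (hr0 : r 0 = 0) (h0 : 0 ∈ s) : zeroPotential r s 0 = 0 := by
  rw [zeroPotential, show ceilIn s 0 = 0 from ceilIn_val h0, hr0, ite_self]

lemma sum_dualCert_eq (hn : 1 ≤ n) (hr0 : r 0 = 0) (h0 : 0 ∈ s) (t : Fin n → Fin (n + 1))
    {cN c0 : ℕ} (hcN : cN ≤ n) (hc0 : c0 ≤ n) (hN : ∀ m, t m = Fin.last n ↔ (m : ℕ) < cN)
    (hZ : ∀ m, t m = 0 ↔ (m : ℕ) < c0) :
    ∑ m, dualCert r s m (t m) = lastPotential r s cN + zeroPotential r s c0 := by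
  have hsplit : ∀ m, dualCert r s m (t m) =
      (if t m = Fin.last n then lastPotential r s (m + 1) - lastPotential r s m else 0) +
        (if t m = 0 then zeroPotential r s (m + 1) - zeroPotential r s m else 0) := by
    intro m
    have := last_ne_zero hn
    unfold dualCert
    split_ifs <;> simp_all
  rw [sum_congr rfl fun m _ => hsplit m, sum_add_distrib, sum_ite_sub_of_iff_lt _ hcN hN,
    sum_ite_sub_of_iff_lt _ hc0 hZ, lastPotential_zero hr0 h0, zeroPotential_zero hr0 h0,
    sub_zero, sub_zero]

end DualCertificate

section DualFeasibility

variable {n : ℕ} {r : Fin (n + 1) → ℝ} {s : Finset (Fin (n + 1))} {σ : Perm (Fin (n + 1))}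

lemma succ_le_topOf_of_topOf_revAssortment_eq_last (hl : Fin.last n ∈ s) {m : ℕ} (hm : m < n)
    (h : topOf σ (revAssortment n m) = Fin.last n) : m + 1 ≤ (topOf σ s : ℕ) := by
  by_contra hlt
  have hT : topOf σ s ∈ revAssortment n m := mem_revAssortment.2 (Or.inl (by omega))
  have hTl : topOf σ s = Fin.last n :=
    σ.injective (le_antisymm (apply_topOf_le hl) (h ▸ apply_topOf_le hT))
  rw [hTl, Fin.val_last] at hlt
  omega

/-- The new product `m + 1` of the `(m + 1)`-st past assortment is the only one that can
beat `0` there. -/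
lemma le_topOf_of_topOf_revAssortment_eq_zero (h0 : 0 ∈ s) {m : ℕ} {a : Fin (n + 1)}
    (ha : a ∈ s) (ham : (a : ℕ) = m + 1) (h : topOf σ (revAssortment n m) = 0)
    (h' : topOf σ (revAssortment n (m + 1)) ≠ 0) : a ≤ topOf σ s := by
  by_contra hlt
  rw [not_le, Fin.lt_def] at hlt
  have hT : topOf σ s ∈ revAssortment n m := mem_revAssortment.2 (Or.inl (by omega))
  have hT0 : topOf σ s = 0 :=
    σ.injective (le_antisymm (apply_topOf_le h0) (h ▸ apply_topOf_le hT))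
  refine h' (topOf_eq_of_forall_le (by simp) fun x hx => ?_)
  by_cases hxa : x = a
  · exact hxa ▸ hT0 ▸ apply_topOf_le ha
  · have hxm : x ∈ revAssortment n m := by
      rw [mem_revAssortment] at hx ⊢
      rw [Fin.ext_iff] at hxa
      omega
    exact h ▸ apply_topOf_le hxm

lemma card_filter_fin_le (p : Fin n → Prop) [DecidablePred p] : #{m | p m} ≤ n :=
  (card_filter_le _ _).trans_eq (card_fin n)

lemma lastPotential_card_le (hr0 : r 0 = 0) (hr : Monotone r) (h0 : 0 ∈ s)
    (hl : Fin.last n ∈ s) (σ : Perm (Fin (n + 1))) :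
    lastPotential r s #{m : Fin n | topOf σ (revAssortment n m) = Fin.last n} ≤
      r (topOf σ s) := by
  have hiff := topOf_revAssortment_eq_iff (i := Fin.last n) (by simp) σ
  have hcn := card_filter_fin_le fun m : Fin n => topOf σ (revAssortment n m) = Fin.last n
  match hc : #{m : Fin n | topOf σ (revAssortment n m) = Fin.last n} with
  | 0 => exact lastPotential_zero hr0 h0 ▸ revenue_nonneg hr0 hr _
  | k + 1 =>
    have hk : k < n := by omega
    have htop : topOf σ (revAssortment n k) = Fin.last n := (hiff ⟨k, hk⟩).2 (by rw [hc]; simp)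
    exact hr (ceilIn_spec (topOf_mem ⟨_, hl⟩)
      (succ_le_topOf_of_topOf_revAssortment_eq_last hl hk htop)).2.2

lemma zeroPotential_card_le (hr0 : r 0 = 0) (hr : Monotone r) (h0 : 0 ∈ s)
    (hl : Fin.last n ∈ s) (σ : Perm (Fin (n + 1))) :
    zeroPotential r s #{m : Fin n | topOf σ (revAssortment n m) = 0} ≤ r (topOf σ s) := by
  have hiff := topOf_revAssortment_eq_iff (i := 0) (by simp) σ
  have hcn := card_filter_fin_le fun m : Fin n => topOf σ (revAssortment n m) = 0
  match hc : #{m : Fin n | topOf σ (revAssortment n m) = 0} with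
  | 0 => exact zeroPotential_zero hr0 h0 ▸ revenue_nonneg hr0 hr _
  | k + 1 =>
    rw [zeroPotential]
    split_ifs with hcond
    · have htop : topOf σ (revAssortment n k) = 0 := (hiff ⟨k, by omega⟩).2 (by rw [hc]; simp)
      have htop' : topOf σ (revAssortment n (k + 1)) ≠ 0 := fun h => by
        simpa [hc] using (hiff ⟨k + 1, hcond.2⟩).1 h
      exact hr (le_topOf_of_topOf_revAssortment_eq_zero h0
        (ceilIn_spec hl (by simp; omega)).1 hcond.1 htop htop')
    · exact revenue_nonneg hr0 hr _

lemma sum_dualCert_le (hn : 1 ≤ n) (hr0 : r 0 = 0) (hr : Monotone r) (h0 : 0 ∈ s)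
    (hl : Fin.last n ∈ s) (σ : Perm (Fin (n + 1))) :
    ∑ m, dualCert r s m (topOf σ (revAssortment n m)) ≤ r (topOf σ s) := by
  have hN := topOf_revAssortment_eq_iff (i := Fin.last n) (by simp) σ
  have hZ := topOf_revAssortment_eq_iff (i := 0) (by simp) σ
  rw [sum_dualCert_eq hn hr0 h0 _ (card_filter_fin_le _) (card_filter_fin_le _) hN hZ]
  have hcard : #{m : Fin n | topOf σ (revAssortment n m) = Fin.last n} = 0 ∨
      #{m : Fin n | topOf σ (revAssortment n m) = 0} = 0 := by
    by_contra! hpos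
    exact last_ne_zero hn (((hN ⟨0, hn⟩).2 (Nat.pos_of_ne_zero hpos.1)).symm.trans
      ((hZ ⟨0, hn⟩).2 (Nat.pos_of_ne_zero hpos.2)))
  rcases hcard with hc | hc
  · rw [hc, lastPotential_zero hr0 h0, zero_add]
    exact zeroPotential_card_le hr0 hr h0 hl σ
  · rw [hc, zeroPotential_zero hr0 h0, add_zero]
    exact lastPotential_card_le hr0 hr h0 hl σ

end DualFeasibility

section SupportingRankings

variable {n : ℕ} {r : Fin (n + 1) → ℝ} {s S : Finset (Fin (n + 1))} {k : Fin (n + 1)}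

/-- The rankings supporting the worst-case model; the dual certificate is tight on each. -/
noncomputable def revRanking (s : Finset (Fin (n + 1))) (k : Fin (n + 1)) : Perm (Fin (n + 1)) :=
  if k ∈ s then toFront k 1 else toFront k (toFront (ceilIn s k) (toFront (Fin.last n) 1))

lemma topOf_revRanking_of_mem (hk : k ∈ s) (h0S : 0 ∈ S) :
    topOf (revRanking s k) S = if k ∈ S then k else 0 := by
  rw [revRanking, if_pos hk, topOf_toFront _ ⟨0, h0S⟩, topOf_one h0S]

lemma topOf_revRanking_of_not_mem (hk : k ∉ s) (hS : S.Nonempty) :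
    topOf (revRanking s k) S = if k ∈ S then k
      else if ceilIn s k ∈ S then ceilIn s k else topOf (toFront (Fin.last n) 1) S := by
  rw [revRanking, if_neg hk, topOf_toFront _ hS, topOf_toFront _ hS]

lemma topOf_revRanking_self (h0 : 0 ∈ s) (hl : Fin.last n ∈ s) (k : Fin (n + 1)) :
    topOf (revRanking s k) s = if k ∈ s then k else ceilIn s k := by
  split_ifs with hk
  · rw [topOf_revRanking_of_mem hk h0, if_pos hk]
  · rw [topOf_revRanking_of_not_mem hk ⟨0, h0⟩, if_neg hk,
      if_pos (ceilIn_spec hl (Fin.is_le k)).1]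

lemma topOf_revRanking_revAssortment_of_not_mem (hl : Fin.last n ∈ s) (hk : k ∉ s) (m : ℕ) :
    topOf (revRanking s k) (revAssortment n m) = if (k : ℕ) ≤ m then k else Fin.last n := by
  have hkl : k ≠ Fin.last n := fun h => hk (h ▸ hl)
  have hkν := (ceilIn_spec hl (Fin.is_le k)).2.1
  rw [topOf_revRanking_of_not_mem hk ⟨0, by simp⟩, topOf_toFront _ ⟨0, by simp⟩]
  simp only [mem_revAssortment, hkl, or_false, or_true, if_true]
  split_ifs with h1 h2 <;> first | rfl | (rcases h2 with h2 | h2 <;> [omega; exact h2])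

lemma sum_dualCert_revRanking_of_mem (hn : 1 ≤ n) (hr0 : r 0 = 0) (h0 : 0 ∈ s)
    (hl : Fin.last n ∈ s) (hk : k ∈ s) :
    ∑ m, dualCert r s m (topOf (revRanking s k) (revAssortment n m)) = r k := by
  have hl0 := last_ne_zero hn
  simp only [topOf_revRanking_of_mem hk (by simp : (0 : Fin (n + 1)) ∈ revAssortment n _),
    mem_revAssortment]
  by_cases hkl : k = Fin.last n
  · subst hkl
    rw [sum_dualCert_eq hn hr0 h0 _ le_rfl (Nat.zero_le n) (by simp) (by simp [hl0]),
      zeroPotential_zero hr0 h0, add_zero, lastPotential,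
      show ceilIn s n = Fin.last n from ceilIn_val hl]
  by_cases hk0 : k = 0
  · subst hk0
    rw [sum_dualCert_eq hn hr0 h0 _ (Nat.zero_le n) le_rfl (by simp [hl0.symm]) (by simp),
      lastPotential_zero hr0 h0, zero_add, zeroPotential, if_neg (by omega), hr0]
  simp only [hkl, or_false]
  rw [sum_dualCert_eq hn hr0 h0 _ (Nat.zero_le n) (Fin.is_le k)
      (fun m => by split_ifs <;> simp [hkl, hl0.symm])
      (fun m => by split_ifs with h <;> simp only [hk0, false_iff, true_iff, not_lt] <;> omega),
    lastPotential_zero hr0 h0, zero_add, zeroPotential, ceilIn_val hk,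
    if_pos ⟨rfl, lt_of_le_of_ne (Fin.is_le k) (Fin.val_ne_iff.2 hkl)⟩]

lemma sum_dualCert_revRanking_of_not_mem (hn : 1 ≤ n) (hr0 : r 0 = 0) (h0 : 0 ∈ s)
    (hl : Fin.last n ∈ s) (hk : k ∉ s) :
    ∑ m, dualCert r s m (topOf (revRanking s k) (revAssortment n m)) = r (ceilIn s k) := by
  have hkl : k ≠ Fin.last n := fun h => hk (h ▸ hl)
  have hk0 : k ≠ 0 := fun h => hk (h ▸ h0)
  simp only [topOf_revRanking_revAssortment_of_not_mem hl hk]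
  rw [sum_dualCert_eq hn hr0 h0 _ (Fin.is_le k) (Nat.zero_le n)
      (fun m => by split_ifs with h <;> simp only [hkl, false_iff, true_iff, not_lt] <;> omega)
      (fun m => by split_ifs <;> simp [hk0, last_ne_zero hn]),
    zeroPotential_zero hr0 h0, add_zero, lastPotential]

lemma sum_dualCert_revRanking (hn : 1 ≤ n) (hr0 : r 0 = 0) (h0 : 0 ∈ s) (hl : Fin.last n ∈ s)
    (k : Fin (n + 1)) :
    ∑ m, dualCert r s m (topOf (revRanking s k) (revAssortment n m)) =
      r (topOf (revRanking s k) s) := by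
  rw [topOf_revRanking_self h0 hl]
  split_ifs with hk
  · exact sum_dualCert_revRanking_of_mem hn hr0 h0 hl hk
  · exact sum_dualCert_revRanking_of_not_mem hn hr0 h0 hl hk

end SupportingRankings

section WorstCaseModel

variable {n : ℕ} {r : Fin (n + 1) → ℝ} {s : Finset (Fin (n + 1))} {ε : ℝ}

noncomputable def revWeight (s : Finset (Fin (n + 1))) (ε : ℝ) (k : Fin (n + 1)) : ℝ :=
  if k ∈ s then 1 else ε

noncomputable def revModel (s : Finset (Fin (n + 1))) (ε : ℝ) : Perm (Fin (n + 1)) → ℝ :=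
  mixture (revWeight s ε) (revRanking s)

lemma revWeight_nonneg (hε : 0 ≤ ε) (k : Fin (n + 1)) : 0 ≤ revWeight s ε k := by
  unfold revWeight
  split_ifs
  exacts [zero_le_one, hε]

lemma sum_revWeight_pos (hε : 0 ≤ ε) (h0 : 0 ∈ s) : 0 < ∑ k, revWeight s ε k :=
  sum_pos' (fun k _ => revWeight_nonneg hε k) ⟨0, mem_univ _, by simp [revWeight, h0]⟩

lemma isChoiceModel_revModel (hε : 0 ≤ ε) (h0 : 0 ∈ s) : IsChoiceModel (revModel s ε) :=
  isChoiceModel_mixture (revWeight_nonneg hε) (sum_revWeight_pos hε h0)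

lemma sum_dualCert_mul_choiceProb_revModel (hn : 1 ≤ n) (hr0 : r 0 = 0) (h0 : 0 ∈ s)
    (hl : Fin.last n ∈ s) (ε : ℝ) :
    ∑ m : Fin n, ∑ i ∈ revAssortment n m,
        dualCert r s m i * choiceProb (revModel s ε) (revAssortment n m) i =
      expRev r (revModel s ε) s := by
  rw [sum_sum_mul_choiceProb (fun m => ⟨0, by simp⟩), revModel, sum_mixture_mul,
    expRev_mixture ⟨0, h0⟩]
  simp only [sum_dualCert_revRanking hn hr0 h0 hl]

end WorstCaseModel

section StrictOptimality

variable {n : ℕ} {r : Fin (n + 1) → ℝ} {s S : Finset (Fin (n + 1))} {k : Fin (n + 1)}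

lemma apply_topOf_revRanking_le_of_mem (hr : Monotone r) (h0 : 0 ∈ s)
    (h0S : 0 ∈ S) (hk : k ∈ s) :
    r (topOf (revRanking s k) S) ≤ r (topOf (revRanking s k) s) := by
  rw [topOf_revRanking_of_mem hk h0S, topOf_revRanking_of_mem hk h0, if_pos hk]
  split_ifs
  exacts [le_rfl, hr (Fin.zero_le k)]

lemma apply_topOf_revRanking_le_of_subset (hr : Monotone r) (h0 : 0 ∈ s)
    (hl : Fin.last n ∈ s) (hsS : s ⊆ S) (k : Fin (n + 1)) :
    r (topOf (revRanking s k) S) ≤ r (topOf (revRanking s k) s) := by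
  rw [topOf_revRanking_self h0 hl]
  split_ifs with hk
  · rw [topOf_revRanking_of_mem hk (hsS h0), if_pos (hsS hk)]
  · have hν := ceilIn_spec hl (Fin.is_le k)
    rw [topOf_revRanking_of_not_mem hk ⟨0, hsS h0⟩, if_pos (hsS hν.1)]
    split_ifs
    exacts [hr (Fin.le_def.2 hν.2.1), le_rfl]

lemma apply_topOf_revRanking_lt (hr : StrictMono r) (h0 : 0 ∈ s) (hl : Fin.last n ∈ s)
    (hkS : k ∈ S) (hk : k ∉ s) :
    r (topOf (revRanking s k) S) < r (topOf (revRanking s k) s) := by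
  have hν := ceilIn_spec hl (Fin.is_le k)
  rw [topOf_revRanking_self h0 hl, if_neg hk, topOf_revRanking_of_not_mem hk ⟨k, hkS⟩,
    if_pos hkS]
  exact hr (lt_of_le_of_ne (Fin.le_def.2 hν.2.1) fun h => hk (h ▸ hν.1))

lemma sum_revWeight_mul_gain_pos_of_ssubset (hr : StrictMono r) (h0 : 0 ∈ s)
    (hl : Fin.last n ∈ s) {ε : ℝ} (hε : 0 < ε) (hsS : s ⊂ S) :
    0 < ∑ k, revWeight s ε k *
      (r (topOf (revRanking s k) s) - r (topOf (revRanking s k) S)) := by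
  obtain ⟨j, hjS, hjs⟩ := exists_of_ssubset hsS
  refine sum_pos' (fun k _ => mul_nonneg (revWeight_nonneg hε.le k)
    (sub_nonneg.2 (apply_topOf_revRanking_le_of_subset hr.monotone h0 hl hsS.subset k)))
    ⟨j, mem_univ j, mul_pos ?_ (sub_pos.2 (apply_topOf_revRanking_lt hr h0 hl hjS hjs))⟩
  simpa [revWeight, hjs] using hε

lemma sum_revWeight_mul_gain_pos_of_not_subset (hr0 : r 0 = 0) (hr : StrictMono r)
    (h0 : 0 ∈ s) {ε : ℝ} (hε : 0 < ε) (hεr : n * r (Fin.last n) * ε < r 1) (h0S : 0 ∈ S)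
    (hsS : ¬s ⊆ S) :
    0 < ∑ k, revWeight s ε k *
      (r (topOf (revRanking s k) s) - r (topOf (revRanking s k) S)) := by
  obtain ⟨a, has, haS⟩ := not_subset.1 hsS
  have hgain : revWeight s ε a * (r (topOf (revRanking s a) s) - r (topOf (revRanking s a) S))
      = r a := by
    simp [revWeight, has, topOf_revRanking_of_mem has h0, topOf_revRanking_of_mem has h0S,
      haS, hr0]
  have hloss : ∀ k ∈ univ.erase a, -(r (Fin.last n) * ε) ≤
      revWeight s ε k * (r (topOf (revRanking s k) s) - r (topOf (revRanking s k) S)) := by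
    intro k _
    have hR := revenue_nonneg hr0 hr.monotone (Fin.last n)
    unfold revWeight
    split_ifs with hk
    · have := apply_topOf_revRanking_le_of_mem hr.monotone h0 h0S hk
      nlinarith
    · have h1 := revenue_nonneg hr0 hr.monotone (topOf (revRanking s k) s)
      have h2 : r (topOf (revRanking s k) S) ≤ r (Fin.last n) := hr.monotone (Fin.le_last _)
      nlinarith
  have hsum := card_nsmul_le_sum _ _ _ hloss
  rw [card_erase_of_mem (mem_univ a), card_univ, Fintype.card_fin, nsmul_eq_mul] at hsum
  have hra : r 1 ≤ r a := hr.monotone (Fin.one_le_of_ne_zero fun h => haS (h ▸ h0S))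
  rw [← add_sum_erase _ _ (mem_univ a), hgain]
  push_cast at hsum
  linarith

lemma expRev_revModel_lt (hr0 : r 0 = 0) (hr : StrictMono r) (h0 : 0 ∈ s)
    (hl : Fin.last n ∈ s) {ε : ℝ} (hε : 0 < ε) (hεr : n * r (Fin.last n) * ε < r 1)
    (h0S : 0 ∈ S) (hS : S ≠ s) :
    expRev r (revModel s ε) S < expRev r (revModel s ε) s := by
  rw [revModel, expRev_mixture ⟨0, h0S⟩, expRev_mixture ⟨0, h0⟩]
  refine div_lt_div_of_pos_right ?_ (sum_revWeight_pos hε.le h0)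
  rw [← sub_pos, ← sum_sub_distrib]
  simp only [← mul_sub]
  by_cases hsS : s ⊆ S
  · exact sum_revWeight_mul_gain_pos_of_ssubset hr h0 hl hε (ssubset_of_subset_of_ne hsS hS.symm)
  · exact sum_revWeight_mul_gain_pos_of_not_subset hr0 hr h0 hε hεr h0S hsS

end StrictOptimality

/-- Theorem 4 of the paper: with reverse revenue-ordered past assortments and fixed revenues,
every assortment containing `0` and `n` is the unique robust optimum for some realization of
the historical sales data. -/
theorem statement8 (n : ℕ) (hn : 1 ≤ n)
    (r : Fin (n + 1) → ℝ) (hr0 : r 0 = 0) (hr : StrictMono r)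
    (Sm : Fin n → Finset (Fin (n + 1)))
    (hSm : ∀ m : Fin n, Sm m =
      Finset.univ.filter (fun i : Fin (n + 1) => (i : ℕ) ≤ (m : ℕ) ∨ i = Fin.last n))
    (Sbar : Finset (Fin (n + 1))) (h0 : (0 : Fin (n + 1)) ∈ Sbar)
    (hl : Fin.last n ∈ Sbar) :
    ∃ v : Fin n → Fin (n + 1) → ℝ,
      (Uset Sm v 0).Nonempty ∧
      ∀ S : Finset (Fin (n + 1)), 0 ∈ S → S ≠ Sbar →
        wcRev Sm v 0 r S < wcRev Sm v 0 r Sbar := by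
  obtain rfl : Sm = fun m : Fin n => revAssortment n m := funext hSm
  have hr1 : 0 < r 1 := hr0 ▸ hr (Fin.pos_iff_ne_zero.2 (by simp [Fin.ext_iff]; omega))
  obtain ⟨ε, hε, hεr⟩ := exists_pos_mul_lt hr1 (n * r (Fin.last n))
  set lam := revModel Sbar ε
  have hlam : IsChoiceModel lam := isChoiceModel_revModel hε.le h0
  have hlamU : lam ∈ Uset (fun m : Fin n => revAssortment n m)
      (fun m i => choiceProb lam (revAssortment n m) i) 0 :=
    ⟨hlam, fun m i _ => by simp⟩
  refine ⟨_, ⟨lam, hlamU⟩, fun S h0S hS => wcRev_lt_wcRev (revenue_nonneg hr0 hr.monotone) hlamU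
    (expRev_revModel_lt hr0 hr h0 hl hε hεr h0S hS) fun lam' hlam' => ?_⟩
  rw [← sum_dualCert_mul_choiceProb_revModel hn hr0 h0 hl]
  exact sum_dual_le_expRev (fun m => ⟨0, by simp⟩) ⟨0, h0⟩
    (sum_dualCert_le hn hr0 hr.monotone h0 hl) hlam'

end RobustAssortment
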